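/- The reduction homomorphism GL(n, ℤ) → GL(n, ℤ/3ℤ) is injective on every finite subgroup; that is, if A ∈ GL(n, ℤ) has finite order and A ≡ I (mod 3), then A = I. -/

import Mathlib

/-! Write `A = 1 + x` with `q ∣ x` for an odd prime `q`. Factoring the order of `A` into primes,
it suffices to treat `(1 + x) ^ p = 1` for a prime `p`, and there `q ^ a ∣ x` with `a ≥ 1` forces
`q ^ (a + 1) ∣ x`, so `x` is divisible by every power of `q`, hence zero.
For `p ≠ q`, `(1 + x) ^ p ≡ 1 + p x (mod x²)` gives `q ^ (2a) ∣ p x`.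
For `p = q`, `x · ∑_{i<q} (1 + x) ^ i = (1 + x) ^ q - 1 = 0` and the sum is `≡ q (mod q²)`
because `q` is odd, so `q ^ (a + 2) ∣ q x`.
Only `x` enters this computation, so it can be done in the commutative ring `ℤ[x]`. -/

section CommRing

variable {R : Type*} [CommRing R] {q : ℕ}

theorem pow_succ_dvd_of_one_add_pow_eq_one (hq : q.Prime) (hq_odd : Odd q)
    (hreg : IsLeftRegular (q : R)) {p a : ℕ} (hp : p.Prime) (ha : a ≠ 0) {x : R}
    (hx : (q : R) ^ a ∣ x) (h : (1 + x) ^ p = 1) : (q : R) ^ (a + 1) ∣ x := by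
  rcases eq_or_ne p q with rfl | hpq
  · obtain ⟨b, rfl⟩ : (p : R) ∣ x := (dvd_pow_self _ ha).trans hx
    set S := ∑ i ∈ Finset.range p, (1 + p * b) ^ i
    have hgeom : p * b * S = 0 := by
      simpa [S, h] using mul_geom_sum (1 + (p : R) * b) p
    have hS : (p : R) ^ 2 ∣ S - p := by
      simpa [S] using odd_sq_dvd_geom_sum₂_sub (1 : R) b hq_odd
    obtain ⟨c, hc⟩ : (p : R) ^ (a + 2) ∣ p * (p * b) := by
      have : p * (p * b) = -(p * b * (S - p)) := by linear_combination hgeom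
      rw [this, dvd_neg, pow_add]
      exact mul_dvd_mul hx hS
    refine ⟨c, hreg ?_⟩
    change (p : R) * (p * b) = p * (p ^ (a + 1) * c)
    rw [hc]
    ring
  · have hxp : x ^ 2 ∣ p * x := by
      simpa [add_comm x, h, mul_comm x] using sq_dvd_add_pow_sub_sub x (1 : R) p
    have hcop : IsCoprime ((q : R) ^ (a + 1)) p := by
      have := ((Nat.coprime_primes hq hp).mpr hpq.symm).isCoprime
      simpa using (this.pow_left (m := a + 1)).map (Int.castRingHom R)
    refine hcop.dvd_of_dvd_mul_left (dvd_trans ?_ hxp)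
    calc (q : R) ^ (a + 1) ∣ ((q : R) ^ a) ^ 2 := by
          rw [← pow_mul]; exact pow_dvd_pow _ (by omega)
      _ ∣ x ^ 2 := pow_dvd_pow_of_dvd hx 2

theorem pow_dvd_of_one_add_pow_eq_one (hq : q.Prime) (hq_odd : Odd q)
    (hreg : IsLeftRegular (q : R)) {p : ℕ} (hp : p.Prime) {x : R} (hx : (q : R) ∣ x)
    (h : (1 + x) ^ p = 1) (a : ℕ) : (q : R) ^ a ∣ x := by
  induction a with
  | zero => simp
  | succ a ih =>
    rcases Nat.eq_zero_or_pos a with rfl | ha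
    · simpa using hx
    · exact pow_succ_dvd_of_one_add_pow_eq_one hq hq_odd hreg hp ha.ne' ih h

theorem eq_zero_of_one_add_pow_eq_one (hq : q.Prime) (hq_odd : Odd q)
    (hreg : IsLeftRegular (q : R)) (hsep : ∀ y : R, (∀ a, (q : R) ^ a ∣ y) → y = 0)
    {k : ℕ} (hk : k ≠ 0) {x : R} (hx : (q : R) ∣ x) (h : (1 + x) ^ k = 1) : x = 0 := by
  induction k using induction_on_primes generalizing x with
  | zero => exact absurd rfl hk
  | one => simpa using h
  | prime_mul p m hp ih =>
    have hy : (q : R) ∣ (1 + x) ^ m - 1 :=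
      hx.trans (by simpa using sub_dvd_pow_sub_pow (1 + x) 1 m)
    have hy0 : (1 + x) ^ m - 1 = 0 := by
      refine hsep _ (pow_dvd_of_one_add_pow_eq_one hq hq_odd hreg hp hy ?_)
      rw [add_sub_cancel, ← pow_mul', h]
    exact ih (by rintro rfl; simp at hk) hx (sub_eq_zero.mp hy0)

end CommRing

open scoped IsMulCommutative in
theorem eq_zero_of_one_add_natCast_mul_pow_eq_one {T : Type*} [Ring T] {q : ℕ}
    (hq : q.Prime) (hq_odd : Odd q) (hreg : IsLeftRegular (q : T))
    (hsep : ∀ y : T, (∀ a, (q : T) ^ a ∣ y) → y = 0)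
    {k : ℕ} (hk : k ≠ 0) {c : T} (h : (1 + q * c) ^ k = 1) : c = 0 := by
  let S := Algebra.adjoin ℤ {c}
  let c' : S := ⟨c, Algebra.self_mem_adjoin_singleton ℤ c⟩
  have hregS : IsLeftRegular (q : S) := fun y z hyz =>
    Subtype.ext (hreg (by simpa using congrArg Subtype.val hyz))
  have hsepS : ∀ y : S, (∀ a, (q : S) ^ a ∣ y) → y = 0 := fun y hy =>
    Subtype.ext (hsep y fun a => by simpa using map_dvd S.val (hy a))
  have hc' : (q : S) * c' = 0 :=
    eq_zero_of_one_add_pow_eq_one hq hq_odd hregS hsepS hk (dvd_mul_right _ _)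
      (Subtype.ext (by simpa using h))
  exact hreg (by simpa using congrArg Subtype.val hc')

namespace Matrix

variable {ι : Type*} [Fintype ι] [DecidableEq ι]

theorem natCast_mul_apply {α : Type*} [NonAssocSemiring α] (q : ℕ) (M : Matrix ι ι α) (i j : ι) :
    ((q : Matrix ι ι α) * M) i j = q * M i j := by
  simp [← diagonal_natCast, diagonal_mul]

theorem isLeftRegular_natCast {q : ℕ} (hq : q ≠ 0) : IsLeftRegular (q : Matrix ι ι ℤ) :=
  fun M N h => ext fun i j =>
    mul_left_cancel₀ (Int.natCast_ne_zero.mpr hq) <| by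
      simpa [natCast_mul_apply] using congrFun (congrFun h i) j

theorem eq_zero_of_forall_natCast_pow_dvd {q : ℕ} (hq : q ≠ 1) {M : Matrix ι ι ℤ}
    (h : ∀ a, (q : Matrix ι ι ℤ) ^ a ∣ M) : M = 0 := by
  ext i j
  by_contra hM
  refine FiniteMultiplicity.not_iff_forall.mpr (fun a => ?_)
    (Int.finiteMultiplicity_iff.mpr ⟨Int.natAbs_natCast q ▸ hq, hM⟩)
  obtain ⟨N, hN⟩ := h a
  have hentry := natCast_mul_apply (q ^ a) N i j
  push_cast at hentry
  rw [hN, hentry]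
  exact dvd_mul_right _ _

theorem exists_eq_one_add_natCast_mul_of_map_eq_one {q : ℕ} {M : Matrix ι ι ℤ}
    (h : M.map (Int.cast : ℤ → ZMod q) = 1) : ∃ C, M = 1 + (q : Matrix ι ι ℤ) * C := by
  have hsub : (M - 1).map (Int.cast : ℤ → ZMod q) = 0 := by
    rw [Matrix.map_sub _ Int.cast_sub, h, Matrix.map_one _ Int.cast_zero Int.cast_one, sub_self]
  have hdvd : ∀ i j, (q : ℤ) ∣ (M - 1) i j := fun i j =>
    (ZMod.intCast_zmod_eq_zero_iff_dvd _ q).mp (congrFun (congrFun hsub i) j)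
  refine ⟨of fun i j => (M - 1) i j / q, ext fun i j => ?_⟩
  rw [add_apply, natCast_mul_apply, of_apply, Int.mul_ediv_cancel' (hdvd i j)]
  simp

end Matrix

theorem stmt_7 (n : ℕ) (A : GL (Fin n) ℤ) (k : ℕ) (hk : 1 ≤ k) (hA : A ^ k = 1)
    (h3 : (A : Matrix (Fin n) (Fin n) ℤ).map (Int.cast : ℤ → ZMod 3) = 1) :
    A = 1 := by
  obtain ⟨C, hC⟩ := Matrix.exists_eq_one_add_natCast_mul_of_map_eq_one h3
  have hC0 : C = 0 :=
    eq_zero_of_one_add_natCast_mul_pow_eq_one Nat.prime_three (by decide)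
      (Matrix.isLeftRegular_natCast three_ne_zero)
      (fun _ => Matrix.eq_zero_of_forall_natCast_pow_dvd (by norm_num))
      (Nat.one_le_iff_ne_zero.mp hk)
      (by rw [← hC, ← Units.val_pow_eq_pow_val, hA, Units.val_one])
  ext1
  simp [hC, hC0]
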